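/- arXiv:1209.0307 — 5 statements merged into one kernel-verified Lean document; each statement's English description precedes it below -/
import Mathlib

section
/- If E ⊆ X × Y is a continuous relation and F ⊆ X × Y is an open subset of X × Y, then E ∩ F is a continuous relation. -/
/-! Open boxes `U ×ˢ W` form a basis of `X × Y`, so `E ∩ F` is a union of relations
`E ∩ U ×ˢ W`. Each of these is continuous, because for open `V` the set
`{x | (E ∩ U ×ˢ W)(x) ∩ V ≠ ∅}` is `U ∩ {x | E(x) ∩ (V ∩ W) ≠ ∅}`, and unions of
continuous relations are continuous. -/

/-- A relation `E ⊆ X × Y` is continuous, i.e. `{x | E(x) ∩ V ≠ ∅}` is open for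
every open `V ⊆ Y`. -/
def IsContinuousRel {X Y : Type*} [TopologicalSpace X] [TopologicalSpace Y]
    (E : Set (X × Y)) : Prop :=
  ∀ V : Set Y, IsOpen V → IsOpen {x | ∃ y ∈ V, (x, y) ∈ E}

section

variable {X Y : Type*} [TopologicalSpace X] [TopologicalSpace Y]

theorem isContinuousRel_iUnion {ι : Sort*} {E : ι → Set (X × Y)}
    (hE : ∀ i, IsContinuousRel (E i)) : IsContinuousRel (⋃ i, E i) := by
  intro V hV
  have hdom : {x | ∃ y ∈ V, (x, y) ∈ ⋃ i, E i} = ⋃ i, {x | ∃ y ∈ V, (x, y) ∈ E i} := by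
    ext x
    simp only [Set.mem_iUnion, Set.mem_ofPred_eq]
    exact ⟨fun ⟨y, hy, i, hi⟩ => ⟨i, y, hy, hi⟩, fun ⟨i, y, hy, hi⟩ => ⟨y, hy, i, hi⟩⟩
  rw [hdom]
  exact isOpen_iUnion fun i => hE i V hV

theorem IsContinuousRel.inter_prod {E : Set (X × Y)} (hE : IsContinuousRel E) {U : Set X}
    {W : Set Y} (hU : IsOpen U) (hW : IsOpen W) : IsContinuousRel (E ∩ U ×ˢ W) := by
  intro V hV
  have hdom : {x | ∃ y ∈ V, (x, y) ∈ E ∩ U ×ˢ W} = U ∩ {x | ∃ y ∈ V ∩ W, (x, y) ∈ E} := by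
    ext x
    simp only [Set.mem_inter_iff, Set.mem_prod, Set.mem_ofPred_eq]
    exact ⟨fun ⟨y, hyV, hyE, hxU, hyW⟩ => ⟨hxU, y, ⟨hyV, hyW⟩, hyE⟩,
      fun ⟨hxU, y, ⟨hyV, hyW⟩, hyE⟩ => ⟨y, hyV, hyE, hxU, hyW⟩⟩
  rw [hdom]
  exact hU.inter (hE _ (hV.inter hW))

end

/-- The intersection of a continuous relation with an open subset of `X × Y`
is a continuous relation. -/
theorem isContinuousRel_inter_isOpen {X Y : Type*} [TopologicalSpace X]
    [TopologicalSpace Y] (E F : Set (X × Y)) (hE : IsContinuousRel E)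
    (hF : IsOpen F) : IsContinuousRel (E ∩ F) := by
  have hboxes := (TopologicalSpace.isTopologicalBasis_opens (α := X)).prod
    (TopologicalSpace.isTopologicalBasis_opens (α := Y))
  rw [hboxes.open_eq_sUnion' hF, Set.sUnion_eq_biUnion, Set.inter_iUnion₂]
  refine isContinuousRel_iUnion fun s => isContinuousRel_iUnion fun hs => ?_
  obtain ⟨U, hU, W, hW, rfl⟩ := hs.1
  exact hE.inter_prod hU hW
end

section
/- Let E be a bi-continuous relation over topological spaces X and Y, with Y second countable. If B ⊆ Y is open and dense in Y, then for residually many x ∈ X (i.e., for all x in some comeager subset of X), B ∩ E(x) is dense in E(x). -/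
/-- A relation `E ⊆ X × Y` is open if the image `E(O)` of every open `O ⊆ X`
is open in `Y`. -/
def IsOpenRel {X Y : Type*} [TopologicalSpace X] [TopologicalSpace Y]
    (E : Set (X × Y)) : Prop :=
  ∀ O : Set X, IsOpen O → IsOpen {y : Y | ∃ x ∈ O, (x, y) ∈ E}

open Topology TopologicalSpace

theorem eventually_residual_mem_imp_mem {X : Type*} [TopologicalSpace X] {U W : Set X}
    (hW : IsOpen W) (hUW : U ⊆ closure W) : ∀ᶠ x in residual X, x ∈ U → x ∈ W := by
  filter_upwards [coborder_mem_residual hW.isLocallyClosed] with x hx hxU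
  rw [coborder_eq_union_closure_compl] at hx
  exact hx.resolve_right (not_not.2 (hUW hxU))

theorem dense_preimage_val_of_isTopologicalBasis {Y : Type*} [TopologicalSpace Y]
    {b : Set (Set Y)} (hb : IsTopologicalBasis b) {s t : Set Y}
    (h : ∀ V ∈ b, (V ∩ s).Nonempty → (V ∩ t ∩ s).Nonempty) :
    Dense (Subtype.val ⁻¹' t : Set s) := by
  rw [Subtype.dense_iff, Subtype.image_preimage_coe]
  intro y hys
  rw [hb.mem_closure_iff]
  intro V hV hyV
  obtain ⟨z, ⟨hzV, hzt⟩, hzs⟩ := h V hV ⟨y, hyV, hys⟩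
  exact ⟨z, hzV, hzs, hzt⟩

theorem IsOpenRel.preimage_subset_closure_preimage_inter {X Y : Type*} [TopologicalSpace X]
    [TopologicalSpace Y] {E : SetRel X Y} (hE : IsOpenRel E) {V B : Set Y} (hV : IsOpen V)
    (hB : Dense B) : E.preimage V ⊆ closure (E.preimage (V ∩ B)) := by
  rintro x ⟨y, hyV, hxy⟩
  rw [mem_closure_iff]
  intro O hO hxO
  have hmeet : (E.image O ∩ V).Nonempty := ⟨y, ⟨x, hxO, hxy⟩, hyV⟩
  obtain ⟨y', ⟨⟨x', hx'O, hx'y'⟩, hy'V⟩, hy'B⟩ :=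
    hB.inter_open_nonempty _ ((hE O hO).inter hV) hmeet
  exact ⟨x', hx'O, y', ⟨hy'V, hy'B⟩, hx'y'⟩

/-- If `E` is a bi-continuous relation over `X` and a second countable `Y`, and
`B` is open and dense in `Y`, then for residually many `x ∈ X` the set `B ∩ E(x)`
is dense in the fiber `E(x)`. -/
theorem residual_dense_in_fiber {X Y : Type*} [TopologicalSpace X] [TopologicalSpace Y]
    [SecondCountableTopology Y] (E : Set (X × Y)) (hEc : IsContinuousRel E)
    (hEo : IsOpenRel E) (B : Set Y) (hBopen : IsOpen B) (hBdense : Dense B) :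
    {x : X | Dense (Subtype.val ⁻¹' B : Set {y : Y // (x, y) ∈ E})} ∈ residual X := by
  obtain ⟨b, hbc, -, hb⟩ := exists_countable_basis Y
  have hbasic : ∀ V ∈ b, ∀ᶠ x in residual X,
      x ∈ SetRel.preimage E V → x ∈ SetRel.preimage E (V ∩ B) :=
    fun V hV ↦ eventually_residual_mem_imp_mem (hEc _ ((hb.isOpen hV).inter hBopen))
      (hEo.preimage_subset_closure_preimage_inter (hb.isOpen hV) hBdense)
  filter_upwards [(eventually_countable_ball hbc).2 hbasic] with x hx
  exact dense_preimage_val_of_isTopologicalBasis (s := {y | (x, y) ∈ E}) hb hx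
end

section
/- Let X and Y be topological spaces with Y second countable, and let E be a bi-continuous relation over X and Y. If A ⊆ Y is meager in Y, then for comeagerly many x ∈ X, A ∩ E(x) is meager in the subspace E(x). -/
/-- Key lemma: for a closed nowhere dense `F` and open `V`, the set of `x` whose
fiber meets `V` but does not meet `V ∩ Fᶜ` is nowhere dense. -/
lemma aux_nwd {X Y : Type*} [TopologicalSpace X] [TopologicalSpace Y]
    (E : Set (X × Y)) (hEc : IsContinuousRel E) (hEo : IsOpenRel E)
    (F : Set Y) (hFc : IsClosed F) (hF : IsNowhereDense F) (V : Set Y) (hV : IsOpen V) :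
    IsNowhereDense ({x | ∃ y ∈ V, (x, y) ∈ E} \ {x | ∃ y ∈ V ∩ Fᶜ, (x, y) ∈ E}) := by
  set U : Set X := {x | ∃ y ∈ V, (x, y) ∈ E} with hU
  set W : Set X := {x | ∃ y ∈ V ∩ Fᶜ, (x, y) ∈ E} with hW
  have hUo : IsOpen U := hEc V hV
  have hWo : IsOpen W := hEc _ (hV.inter hFc.isOpen_compl)
  rw [IsNowhereDense, Set.eq_empty_iff_forall_notMem]
  intro x hx
  set O := interior (closure (U \ W)) with hO
  have hOo : IsOpen O := isOpen_interior
  -- O meets U \ W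
  obtain ⟨x₀, hx₀O, hx₀⟩ : (O ∩ (U \ W)).Nonempty := by
    rcases (mem_closure_iff.mp (interior_subset hx)) O hOo hx with ⟨z, hz⟩
    exact ⟨z, hz.1, hz.2⟩
  -- consider E(O ∩ U) ∩ V, open nonempty, not contained in F
  have hOU : IsOpen (O ∩ U) := hOo.inter hUo
  have hTo : IsOpen ({y | ∃ x ∈ O ∩ U, (x, y) ∈ E} ∩ V) := (hEo _ hOU).inter hV
  obtain ⟨y₀, hy₀V, hy₀E⟩ := hx₀.1
  have hTne : ({y | ∃ x ∈ O ∩ U, (x, y) ∈ E} ∩ V).Nonempty :=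
    ⟨y₀, ⟨x₀, ⟨hx₀O, hx₀.1⟩, hy₀E⟩, hy₀V⟩
  -- F has empty interior, so find a point outside F
  have hFint : interior F = ∅ := (hFc.isNowhereDense_iff).mp hF
  have : ¬ ({y | ∃ x ∈ O ∩ U, (x, y) ∈ E} ∩ V ⊆ F) := by
    intro hsub
    have := interior_maximal hsub hTo
    rw [hFint, Set.subset_empty_iff] at this
    exact hTne.ne_empty this
  obtain ⟨y₁, hy₁T, hy₁F⟩ := Set.not_subset.mp this
  obtain ⟨⟨x₁, hx₁OU, hx₁E⟩, hy₁V⟩ := hy₁T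
  have hx₁W : x₁ ∈ W := ⟨y₁, ⟨hy₁V, hy₁F⟩, hx₁E⟩
  -- O ∩ W is open nonempty, contained in closure (U \ W), but disjoint from U \ W
  have hOWo : IsOpen (O ∩ W) := hOo.inter hWo
  have hOWne : (O ∩ W).Nonempty := ⟨x₁, hx₁OU.1, hx₁W⟩
  have hOWsub : O ∩ W ⊆ closure (U \ W) := fun z hz => interior_subset hz.1
  obtain ⟨z, hzO, hzW⟩ := hOWne
  rcases mem_closure_iff.mp (hOWsub ⟨hzO, hzW⟩) (O ∩ W) hOWo ⟨hzO, hzW⟩ with ⟨w, hw1, hw2⟩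
  exact hw2.2 hw1.2

/-- Kuratowski–Ulam for bi-continuous relations: if `A` is meager in the second
countable space `Y`, then for residually many `x ∈ X` the set `A ∩ E(x)` is
meager in the fiber `E(x)`. -/
theorem residual_meager_in_fiber {X Y : Type*} [TopologicalSpace X] [TopologicalSpace Y]
    [SecondCountableTopology Y] (E : Set (X × Y)) (hEc : IsContinuousRel E)
    (hEo : IsOpenRel E) (A : Set Y) (hA : IsMeagre A) :
    {x : X | IsMeagre (Subtype.val ⁻¹' A : Set {y : Y // (x, y) ∈ E})} ∈ residual X := by
  obtain ⟨S, hSnwd, hSct, hSsub⟩ := (isMeagre_iff_countable_union_isNowhereDense).mp hA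
  set B := TopologicalSpace.countableBasis Y with hB
  have hBct : B.Countable := TopologicalSpace.countable_countableBasis Y
  have hBbasis := TopologicalSpace.isBasis_countableBasis Y
  -- the residual set G
  set G : Set X := ⋂ t ∈ S, ⋂ V ∈ B,
      ({x | ∃ y ∈ V, (x, y) ∈ E} \ {x | ∃ y ∈ V ∩ (closure t)ᶜ, (x, y) ∈ E})ᶜ with hG
  have hGres : G ∈ residual X := by
    refine (countable_bInter_mem hSct).mpr fun t ht => ?_
    refine (countable_bInter_mem hBct).mpr fun V hV => ?_
    have hnwd := aux_nwd E hEc hEo (closure t) isClosed_closure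
      ((hSnwd t ht).closure) V (TopologicalSpace.isOpen_of_mem_countableBasis hV)
    obtain ⟨c, hsubc, hcnwd, hcc⟩ := hnwd.subset_of_closed_isNowhereDense
    exact Filter.mem_of_superset
      (residual_of_dense_open hcc.isOpen_compl
        (((isClosed_isNowhereDense_iff_compl).mp ⟨hcc, hcnwd⟩).2))
      (Set.compl_subset_compl.mpr hsubc)
  refine Filter.mem_of_superset hGres fun x hx => ?_
  show IsMeagre _
  -- show A ∩ E(x) meagre in the fiber
  rw [isMeagre_iff_countable_union_isNowhereDense]
  refine ⟨(fun t => (Subtype.val ⁻¹' (closure t) : Set {y : Y // (x, y) ∈ E})) '' S,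
    ?_, hSct.image _, ?_⟩
  · rintro _ ⟨t, ht, rfl⟩
    -- preimage of closure t is closed in fiber; show empty interior
    have hcl : IsClosed (Subtype.val ⁻¹' (closure t) : Set {y : Y // (x, y) ∈ E}) :=
      isClosed_closure.preimage continuous_subtype_val
    rw [hcl.isNowhereDense_iff, Set.eq_empty_iff_forall_notMem]
    rintro ⟨y, hyE⟩ hy
    -- interior is open in subtype: get an open set in Y
    obtain ⟨Gy, hGyo, hGyeq⟩ := isOpen_induced_iff.mp
      (isOpen_interior (s := (Subtype.val ⁻¹' (closure t) : Set {y : Y // (x, y) ∈ E})))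
    have hyGy : y ∈ Gy := by
      have : (⟨y, hyE⟩ : {y : Y // (x, y) ∈ E}) ∈ Subtype.val ⁻¹' Gy := hGyeq ▸ hy
      exact this
    obtain ⟨V, hVB, hyV, hVsub⟩ := hBbasis.exists_subset_of_mem_open hyGy hGyo
    -- x is in the piece of G indexed by t, V
    have hxG : x ∈ ({x | ∃ y ∈ V, (x, y) ∈ E} \
        {x | ∃ y ∈ V ∩ (closure t)ᶜ, (x, y) ∈ E})ᶜ := by
      have := hx
      rw [hG] at this
      exact Set.mem_iInter₂.mp (Set.mem_iInter₂.mp this t ht) V hVB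
    have hxU : x ∈ {x | ∃ y ∈ V, (x, y) ∈ E} := ⟨y, hyV, hyE⟩
    have hxW : x ∈ {x | ∃ y ∈ V ∩ (closure t)ᶜ, (x, y) ∈ E} := by
      by_contra h
      exact hxG ⟨hxU, h⟩
    obtain ⟨y', ⟨hy'V, hy'F⟩, hy'E⟩ := hxW
    -- y' ∈ V ⊆ Gy, so ⟨y', _⟩ ∈ interior ⊆ preimage closure t, contradiction
    have : (⟨y', hy'E⟩ : {y : Y // (x, y) ∈ E}) ∈
        interior (Subtype.val ⁻¹' (closure t) : Set {y : Y // (x, y) ∈ E}) := by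
      rw [← hGyeq]
      exact hVsub hy'V
    exact hy'F (interior_subset (s := (Subtype.val ⁻¹' (closure t) : Set {y : Y // (x, y) ∈ E})) this)
  · intro z hz
    obtain ⟨t, ht, hzt⟩ := hSsub hz
    exact ⟨_, ⟨t, ht, rfl⟩, subset_closure hzt⟩
end

section
/- If 0 < r < s, then for all continuous functions f, g : ℝ → ℝ, the set E_s(g) \ E_r(f) is dense in E_s(g) with respect to the compact-open topology, where E_t(h) = {k ∈ C(ℝ) : |h(x) − k(x)| < t for all x ∈ ℝ}. -/
/-!
A compact-open neighbourhood of `k` only constrains `k` on some compact set `K`. Off `K`, use a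
Urysohn function `u` with `u = 0` on `K` and `u x₀ = 1` at a point `x₀ ∉ K` to move `k` towards
`g - c`, where the constant `c` satisfies `|c| < s` and `r ≤ |f x₀ - g x₀ + c|`. Pointwise,
`g - k'` is then a convex combination of `g - k` and `c`, so it stays in `(-s, s)`, while at `x₀`
the new function is at distance at least `r` from `f`.
-/

open Set Topology

theorem ContinuousMap.exists_isCompact_eqOn_subset_of_mem_nhds {X Y : Type*}
    [TopologicalSpace X] [TopologicalSpace Y] {f : C(X, Y)} {V : Set C(X, Y)} (hV : V ∈ 𝓝 f) :
    ∃ K, IsCompact K ∧ {g : C(X, Y) | EqOn g f K} ⊆ V := by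
  obtain ⟨S, hS, hSf, hSV⟩ := ContinuousMap.mem_nhds_iff.mp hV
  refine ⟨⋃ KU ∈ S, KU.1, hS.isCompact_biUnion fun KU hKU => (hSf _ _ hKU).1, ?_⟩
  intro g hg
  refine hSV fun K U hKU => ?_
  have hgK : EqOn g f K := hg.mono (subset_biUnion_of_mem (u := fun KU => KU.1) hKU)
  exact fun x hx => hgK hx ▸ (hSf K U hKU).2.2 hx

theorem IsCompact.exists_continuousMap_eqOn_zero_eq_one {X : Type*} [TopologicalSpace X]
    [CompletelyRegularSpace X] [NoncompactSpace X] {K : Set X} (hK : IsCompact K) :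
    ∃ (u : C(X, ℝ)) (x₀ : X), EqOn u 0 K ∧ u x₀ = 1 ∧ ∀ x, u x ∈ Icc (0 : ℝ) 1 := by
  obtain ⟨x₀, hx₀⟩ := (ne_univ_iff_exists_notMem _).mp hK.closure.ne_univ
  obtain ⟨v, hv, hvx₀, hvK⟩ :=
    CompletelyRegularSpace.completely_regular x₀ _ isClosed_closure hx₀
  refine ⟨⟨fun x => 1 - (v x : ℝ), by fun_prop⟩, x₀, fun x hx => ?_, ?_, fun x =>
    ⟨unitInterval.one_minus_nonneg _, unitInterval.one_minus_le_one _⟩⟩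
  · simp [hvK (subset_closure hx)]
  · simp [hvx₀]

theorem exists_abs_lt_le_abs_add {r s : ℝ} (hr : 0 ≤ r) (hrs : r < s) (a : ℝ) :
    ∃ c, |c| < s ∧ r ≤ |a + c| := by
  rcases le_total 0 a with ha | ha
  · exact ⟨r, by rwa [abs_of_nonneg hr], by rw [abs_of_nonneg (by linarith)]; linarith⟩
  · exact ⟨-r, by rwa [abs_neg, abs_of_nonneg hr], by rw [abs_of_nonpos (by linarith)]; linarith⟩

theorem exists_eqOn_forall_abs_sub_lt_not_forall_abs_sub_lt {X : Type*} [TopologicalSpace X]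
    [CompletelyRegularSpace X] [NoncompactSpace X] {r s : ℝ} (hr : 0 ≤ r) (hrs : r < s)
    (f g : C(X, ℝ)) {k : C(X, ℝ)} (hk : ∀ x, |g x - k x| < s) {K : Set X} (hK : IsCompact K) :
    ∃ k' : C(X, ℝ), EqOn k' k K ∧ (∀ x, |g x - k' x| < s) ∧ ¬ ∀ x, |f x - k' x| < r := by
  obtain ⟨u, x₀, huK, hux₀, hu⟩ := hK.exists_continuousMap_eqOn_zero_eq_one
  obtain ⟨c, hcs, hcr⟩ := exists_abs_lt_le_abs_add hr hrs (f x₀ - g x₀)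
  set k' := k + u * (g - ContinuousMap.const X c - k)
  have hgk' (x : X) : g x - k' x = (1 - u x) * (g x - k x) + u x * c := by
    simp only [k', ContinuousMap.add_apply, ContinuousMap.mul_apply, ContinuousMap.sub_apply,
      ContinuousMap.const_apply]
    ring
  refine ⟨k', fun x hx => by simp [k', huK hx], fun x => ?_, fun h => ?_⟩
  · rw [hgk', abs_lt]
    exact convex_Ioo (-s) s (abs_lt.mp (hk x)) (abs_lt.mp hcs) (sub_nonneg.2 (hu x).2) (hu x).1
      (sub_add_cancel 1 (u x))
  · have hgk'x₀ : g x₀ - k' x₀ = c := by simpa [hux₀] using hgk' x₀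
    exact (h x₀).not_ge (by rwa [show f x₀ - k' x₀ = f x₀ - g x₀ + c by linarith])

/-- If `0 < r < s`, then for all `f, g ∈ C(ℝ)` the set `E_s(g) \ E_r(f)` is dense
in `E_s(g)` (with the compact-open topology), where
`E_t(h) = {k | ∀ x, |h(x) - k(x)| < t}`. -/
theorem dense_diff_uniformCloseness (r s : ℝ) (hr : 0 < r) (hrs : r < s)
    (f g : C(ℝ, ℝ)) :
    Dense {k : {k : C(ℝ, ℝ) // ∀ x : ℝ, |g x - k x| < s} |
      ¬ ∀ x : ℝ, |f x - (k : C(ℝ, ℝ)) x| < r} := by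
  refine dense_iff_inter_open.mpr fun U hU ⟨k, hkU⟩ => ?_
  obtain ⟨V, hV, rfl⟩ := isOpen_induced_iff.mp hU
  obtain ⟨K, hK, hKV⟩ := ContinuousMap.exists_isCompact_eqOn_subset_of_mem_nhds (hV.mem_nhds hkU)
  obtain ⟨k', hk'K, hk's, hk'r⟩ :=
    exists_eqOn_forall_abs_sub_lt_not_forall_abs_sub_lt hr.le hrs f g k.2 hK
  exact ⟨⟨k', hk's⟩, hKV hk'K, hk'r⟩
end

section
/- The open ball B_∞(f, r) = {g ∈ C(ℝ) : sup_x |f(x)−g(x)| < r} is not a Gδ subset of C(ℝ) with the compact-open topology; indeed, the empty set is comeager in B_∞(f,r) with the subspace topology: B_∞(f,r) is the intersection of countably many of its dense open subsets with empty intersection. -/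
/-! A `Gδ` subset of a completely metrizable space is a Baire space, so it suffices to find
dense open subsets of the ball with empty intersection: the functions that differ from `f` by
more than `r - 1/(n+1)` somewhere beyond `|x| = n`. They are dense because a compact-open
neighbourhood of `g` only constrains `g` on a compact set, off which `g` can be bent, inside the
ball, to `f - s` for any `|s| < r`. No function of the ball lies in all of them, since its
uniform distance to `f` is `< r`. -/

open scoped ENNReal

/-- The open uniform ball `B_∞(f, r) = {g | sup_x |f(x) - g(x)| < r}` in `C(ℝ)`. -/
def uniformBall (f : C(ℝ, ℝ)) (r : ℝ) : Set C(ℝ, ℝ) :=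
  {g | (⨆ x : ℝ, ENNReal.ofReal |f x - g x|) < ENNReal.ofReal r}

open Set Filter Topology TopologicalSpace

theorem IsGδ.baireSpace_of_isCompletelyPseudoMetrizableSpace {X : Type*} [TopologicalSpace X]
    [IsCompletelyPseudoMetrizableSpace X] {s : Set X} (hs : IsGδ s) : BaireSpace s := by
  have : IsCompletelyPseudoMetrizableSpace (closure s) :=
    isClosed_closure.isCompletelyPseudoMetrizableSpace
  have : BaireSpace ((↑) ⁻¹' s : Set (closure s)) :=
    (hs.preimage continuous_subtype_val).baireSpace_of_dense
      (by simp [Subtype.dense_iff, inter_eq_right.mpr subset_closure])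
  have h_homeo : ((↑) ⁻¹' s : Set (closure s)) ≃ₜ s := ⟨⟨fun x => ⟨x, x.2⟩,
    fun x => ⟨⟨x, subset_closure x.2⟩, x.2⟩, by grind, by grind⟩, by fun_prop, by fun_prop⟩
  exact h_homeo.baireSpace

theorem not_isGδ_of_iInter_isOpen_dense_eq_empty {X : Type*} [TopologicalSpace X]
    [IsCompletelyPseudoMetrizableSpace X] {s : Set X} (hs : s.Nonempty) {U : ℕ → Set s}
    (hUo : ∀ n, IsOpen (U n)) (hUd : ∀ n, Dense (U n)) (hU : ⋂ n, U n = ∅) : ¬ IsGδ s := by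
  intro hG
  have := hG.baireSpace_of_isCompletelyPseudoMetrizableSpace
  have : Nonempty s := hs.to_subtype
  simpa [hU] using (dense_iInter_of_isOpen_nat hUo hUd).nonempty

theorem ContinuousMap.exists_isCompact_forall_eqOn_mem {X Y : Type*} [TopologicalSpace X]
    [UniformSpace Y] {g : C(X, Y)} {O : Set C(X, Y)} (hO : O ∈ 𝓝 g) :
    ∃ K, IsCompact K ∧ ∀ h : C(X, Y), EqOn h g K → h ∈ O := by
  obtain ⟨⟨K, V⟩, ⟨hK, hV⟩, hsub⟩ :=
    (nhds_basis_uniformity' ContinuousMap.hasBasis_compactConvergenceUniformity).mem_iff.1 hO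
  exact ⟨K, hK, fun h hKh => hsub fun x hx => hKh hx ▸ refl_mem_uniformity hV⟩

theorem exists_lt_of_mem_uniformBall {f g : C(ℝ, ℝ)} {r : ℝ} (hg : g ∈ uniformBall f r) :
    ∃ t < r, 0 ≤ t ∧ ∀ x, |f x - g x| ≤ t := by
  have hlt : _ < ENNReal.ofReal r := hg
  have hne := hlt.ne_top
  refine ⟨_, (ENNReal.lt_ofReal_iff_toReal_lt hne).1 hlt, ENNReal.toReal_nonneg, fun x => ?_⟩
  exact (ENNReal.ofReal_le_iff_le_toReal hne).1 (le_iSup (fun x => ENNReal.ofReal |f x - g x|) x)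

theorem mem_uniformBall_of_le {f g : C(ℝ, ℝ)} {r t : ℝ} (ht : t < r)
    (h : ∀ x, |f x - g x| ≤ t) : g ∈ uniformBall f r :=
  (iSup_le fun x => ENNReal.ofReal_le_ofReal (h x)).trans_lt <|
    ENNReal.ofReal_lt_ofReal_iff'.2 ⟨ht, (abs_nonneg _).trans (h 0) |>.trans_lt ht⟩

theorem self_mem_uniformBall (f : C(ℝ, ℝ)) {r : ℝ} (hr : 0 < r) : f ∈ uniformBall f r :=
  mem_uniformBall_of_le hr fun x => by simp

theorem exists_mem_uniformBall_eqOn_of_abs_lt {f g : C(ℝ, ℝ)} {r s : ℝ}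
    (hg : g ∈ uniformBall f r) (hs : |s| < r) (M : ℝ) :
    ∃ h ∈ uniformBall f r, EqOn h g (Metric.closedBall 0 M) ∧
      ∀ x, M + 1 ≤ |x| → f x - h x = s := by
  obtain ⟨t, htr, -, hgt⟩ := exists_lt_of_mem_uniformBall hg
  set φ : ℝ → ℝ := fun x => max 0 (min 1 (|x| - M))
  have hφ0 (x) : 0 ≤ φ x := le_max_left _ _
  have hφ1 (x) : φ x ≤ 1 := max_le zero_le_one (min_le_left _ _)
  let h : C(ℝ, ℝ) := ⟨fun x => g x + φ x * (f x - g x - s), by fun_prop⟩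
  have hfh (x) : f x - h x = (1 - φ x) * (f x - g x) + φ x * s := by
    simp only [h, ContinuousMap.coe_mk]; ring
  refine ⟨h, mem_uniformBall_of_le (max_lt htr hs) fun x => ?_, fun x hx => ?_, fun x hx => ?_⟩
  · have hmem := convex_closedBall (0 : ℝ) (max t |s|)
      (mem_closedBall_zero_iff.2 ((hgt x).trans (le_max_left t |s|)))
      (mem_closedBall_zero_iff.2 (le_max_right t |s|)) (sub_nonneg.2 (hφ1 x)) (hφ0 x)
      (sub_add_cancel 1 (φ x))
    simpa [hfh] using hmem
  · have : |x| - M ≤ 0 := by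
      rw [Metric.mem_closedBall, Real.dist_0_eq_abs] at hx; linarith
    simp [h, φ, this]
  · have : φ x = 1 := by
      simp only [φ, min_eq_left (by linarith : (1 : ℝ) ≤ |x| - M), max_eq_right zero_le_one]
    rw [hfh, this]; ring

def deviatesBeyond (f : C(ℝ, ℝ)) (R ρ : ℝ) : Set C(ℝ, ℝ) :=
  {g | ∃ x, R < |x| ∧ ρ < |f x - g x|}

theorem isOpen_deviatesBeyond (f : C(ℝ, ℝ)) (R ρ : ℝ) : IsOpen (deviatesBeyond f R ρ) := by
  have : deviatesBeyond f R ρ = ⋃ x ∈ {x : ℝ | R < |x|}, {g : C(ℝ, ℝ) | ρ < |f x - g x|} := by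
    ext; simp [deviatesBeyond]
  rw [this]
  exact isOpen_biUnion fun x _ => isOpen_lt continuous_const (by fun_prop)

theorem dense_deviatesBeyond (f : C(ℝ, ℝ)) {r ρ : ℝ} (hρ : ρ < r) (R : ℝ) :
    Dense ((↑) ⁻¹' deviatesBeyond f R ρ : Set (uniformBall f r)) := by
  rw [dense_iff_inter_open]
  rintro V hV ⟨⟨g, hg⟩, hgV⟩
  obtain ⟨O, hO, rfl⟩ := isOpen_induced_iff.1 hV
  obtain ⟨K, hK, hKO⟩ := ContinuousMap.exists_isCompact_forall_eqOn_mem (hO.mem_nhds hgV)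
  obtain ⟨M, hKM⟩ := hK.isBounded.subset_closedBall 0
  obtain ⟨t, htr, ht0, -⟩ := exists_lt_of_mem_uniformBall hg
  have hmax : max ρ 0 < r := max_lt hρ (ht0.trans_lt htr)
  obtain ⟨s, hρs, hsr⟩ := exists_between hmax
  have hs0 : 0 < s := (le_max_right ρ 0).trans_lt hρs
  obtain ⟨h, hh, hhg, hfh⟩ := exists_mem_uniformBall_eqOn_of_abs_lt hg
    (by rwa [abs_of_pos hs0]) (max M R)
  have hx : |(|max M R| + 1)| = |max M R| + 1 := abs_of_pos (by positivity)
  refine ⟨⟨h, hh⟩, hKO h (hhg.mono (hKM.trans (Metric.closedBall_subset_closedBall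
    (le_max_left M R)))), |max M R| + 1, ?_, ?_⟩
  · linarith [le_max_right M R, le_abs_self (max M R)]
  · rw [hfh _ (by linarith [le_abs_self (max M R)]), abs_of_pos hs0]
    exact (le_max_left ρ 0).trans_lt hρs

theorem iInter_deviatesBeyond_eq_empty (f : C(ℝ, ℝ)) {r : ℝ} (R ρ : ℕ → ℝ)
    (hρ : Tendsto ρ atTop (𝓝 r)) :
    ⋂ n, ((↑) ⁻¹' deviatesBeyond f (R n) (ρ n) : Set (uniformBall f r)) = ∅ := by
  refine eq_empty_iff_forall_notMem.2 fun ⟨g, hg⟩ hmem => ?_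
  obtain ⟨t, htr, -, hgt⟩ := exists_lt_of_mem_uniformBall hg
  obtain ⟨n, hn⟩ := (hρ.eventually (lt_mem_nhds htr)).exists
  obtain ⟨x, -, hx⟩ := mem_iInter.1 hmem n
  linarith [hgt x]

/-- With the compact-open topology on `C(ℝ)`, the ball `B_∞(f, r)` is not a `Gδ`
set; indeed the empty set is comeager in `B_∞(f, r)`: it is the intersection of a
countable family of dense open subsets of `B_∞(f, r)` having empty intersection. -/
theorem uniformBall_not_isGδ (f : C(ℝ, ℝ)) (r : ℝ) (hr : 0 < r) :
    ¬ IsGδ (uniformBall f r) ∧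
      ∃ U : ℕ → Set (uniformBall f r),
        (∀ n, IsOpen (U n) ∧ Dense (U n)) ∧ (⋂ n, U n) = ∅ := by
  set ρ : ℕ → ℝ := fun n => r - 1 / (n + 1)
  have hρ : Tendsto ρ atTop (𝓝 r) := by
    simpa [ρ] using tendsto_const_nhds.sub (tendsto_one_div_add_atTop_nhds_zero_nat (𝕜 := ℝ))
  set U : ℕ → Set (uniformBall f r) := fun n => (↑) ⁻¹' deviatesBeyond f n (ρ n)
  have hUo (n : ℕ) : IsOpen (U n) := (isOpen_deviatesBeyond f _ _).preimage continuous_subtype_val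
  have hUd (n : ℕ) : Dense (U n) := dense_deviatesBeyond f (sub_lt_self r (by positivity)) _
  have hU : ⋂ n, U n = ∅ := iInter_deviatesBeyond_eq_empty f _ ρ hρ
  exact ⟨not_isGδ_of_iInter_isOpen_dense_eq_empty ⟨f, self_mem_uniformBall f hr⟩ hUo hUd hU,
    U, fun n => ⟨hUo n, hUd n⟩, hU⟩
end
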